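/- Let K be a convex subset of ℝⁿ with positive Gaussian measure a = γ(K), and let F : ℝ → ℝ be an increasing continuous function integrable against γ restricted to K and to the half-space H_K = {x : x₁ ≤ ψ^{-1}(a)}. Then ∫_K F(x₁) dγ(x) ≥ ∫_{H_K} F(x₁) dγ(x). -/

import Mathlib

open MeasureTheory Real Set

/-- The standard Gaussian measure on `ℝⁿ`. -/
noncomputable def stdGaussian (n : ℕ) : Measure (EuclideanSpace ℝ (Fin n)) :=
  volume.withDensity fun x =>
    ENNReal.ofReal ((2 * π) ^ (-(n : ℝ) / 2) * Real.exp (-‖x‖ ^ 2 / 2))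

lemma stdGaussian_finite (n : ℕ) : IsFiniteMeasure (stdGaussian n) := by
  constructor
  rw [stdGaussian, withDensity_apply _ MeasurableSet.univ, Measure.restrict_univ]
  have hexp : Integrable (fun x : EuclideanSpace ℝ (Fin n) => Real.exp (-‖x‖ ^ 2 / 2)) := by
    have h := (GaussianFourier.integrable_cexp_neg_mul_sq_norm_add
      (V := EuclideanSpace ℝ (Fin n)) (b := (1/2 : ℂ)) (by norm_num) 0 0).norm
    convert h using 2 with x
    rw [Complex.norm_exp]
    congr 1
    simp [← Complex.ofReal_pow]
    ring
  have hInt := hexp.const_mul ((2 * π) ^ (-(n : ℝ) / 2))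
  exact hInt.lintegral_lt_top

/-- For a convex set `K` of positive Gaussian measure and an increasing continuous `F`,
the integral of `F(x₁)` over `K` is at least that over the left half-space of the
same Gaussian measure. -/
theorem stmt8 (n : ℕ) [NeZero n] (K : Set (EuclideanSpace ℝ (Fin n)))
    (hconv : Convex ℝ K) (hmeas : MeasurableSet K)
    (hpos : 0 < stdGaussian n K)
    (F : ℝ → ℝ) (hF : Monotone F) (hFc : Continuous F)
    (c : ℝ)
    (hc : stdGaussian n {x : EuclideanSpace ℝ (Fin n) | x 0 ≤ c} = stdGaussian n K)
    (hint1 : IntegrableOn (fun x => F (x 0)) K (stdGaussian n))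
    (hint2 : IntegrableOn (fun x => F (x 0))
      {x : EuclideanSpace ℝ (Fin n) | x 0 ≤ c} (stdGaussian n)) :
    (∫ x in {x : EuclideanSpace ℝ (Fin n) | x 0 ≤ c}, F (x 0) ∂(stdGaussian n))
      ≤ ∫ x in K, F (x 0) ∂(stdGaussian n) := by
  haveI := stdGaussian_finite n
  set γ := stdGaussian n
  set H : Set (EuclideanSpace ℝ (Fin n)) := {x | x 0 ≤ c} with hH
  have hcont : Continuous fun x : EuclideanSpace ℝ (Fin n) => x 0 :=
    (EuclideanSpace.proj (0 : Fin n)).continuous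
  have hHmeas : MeasurableSet H := measurableSet_le hcont.measurable measurable_const
  have hm : γ (H \ K) = γ (K \ H) := by
    have h1 : γ (H ∩ K) + γ (H \ K) = γ H := measure_inter_add_diff H hmeas
    have h2 : γ (K ∩ H) + γ (K \ H) = γ K := measure_inter_add_diff K hHmeas
    rw [Set.inter_comm] at h2
    have hfin : γ (H ∩ K) ≠ ⊤ := measure_ne_top γ _
    have : γ (H ∩ K) + γ (H \ K) = γ (H ∩ K) + γ (K \ H) := by
      rw [h1, h2, hc]
    exact (ENNReal.add_right_inj hfin).mp this
  have hsplit1 : (∫ x in H, F (x 0) ∂γ)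
      = (∫ x in H ∩ K, F (x 0) ∂γ) + ∫ x in H \ K, F (x 0) ∂γ :=
    (integral_inter_add_diff hmeas hint2).symm
  have hsplit2 : (∫ x in K, F (x 0) ∂γ)
      = (∫ x in K ∩ H, F (x 0) ∂γ) + ∫ x in K \ H, F (x 0) ∂γ :=
    (integral_inter_add_diff hHmeas hint1).symm
  rw [hsplit1, hsplit2, Set.inter_comm K H]
  gcongr _ + ?_
  have hiHK : IntegrableOn (fun x => F (x 0)) (H \ K) γ :=
    hint2.mono_set Set.diff_subset
  have hiKH : IntegrableOn (fun x => F (x 0)) (K \ H) γ :=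
    hint1.mono_set Set.diff_subset
  have h1 : (∫ x in H \ K, F (x 0) ∂γ) ≤ (γ (H \ K)).toReal * F c := by
    have := setIntegral_mono_on hiHK (integrableOn_const (measure_ne_top γ _))
      (hHmeas.diff hmeas) (fun x hx => hF hx.1)
    simpa [setIntegral_const, smul_eq_mul, measureReal_def] using this
  have h2 : (γ (K \ H)).toReal * F c ≤ ∫ x in K \ H, F (x 0) ∂γ := by
    have := setIntegral_mono_on (integrableOn_const (measure_ne_top γ _)) hiKH
      (hmeas.diff hHmeas) (fun x hx => hF (le_of_not_ge hx.2))
    simpa [setIntegral_const, smul_eq_mul, measureReal_def] using this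
  calc (∫ x in H \ K, F (x 0) ∂γ) ≤ (γ (H \ K)).toReal * F c := h1
    _ = (γ (K \ H)).toReal * F c := by rw [hm]
    _ ≤ _ := h2
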